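/- arXiv:2506.14420 — 6 statements merged into one kernel-verified Lean document; each statement's English description precedes it below -/
import Mathlib

section
/- Let λ ≥ 1. Then I(S;Z) ≤ I_SD3(λ), i.e. the SD3 density-deviation objective is bounded below by the mutual information between states and skills. -/
/-!
The inequality holds summand by summand. Splitting off the `z`-th term of the marginal,
`∑ z', d z' s * p z' = d z s * p z + R` with `R ≥ 0` the contribution of the other skills, and
the SD3 ratio `λ d / (λ d p + R) = 1 / (p + R / (λ d))` is nondecreasing in `λ`; at `λ = 1` it is
the ratio `d / ∑ z', d z' s * p z'` of the mutual information.
-/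

open Finset Real

lemma div_add_mul_le_mul_div_mul_add {a b r lam : ℝ} (ha : 0 < a) (hb : 0 < b) (hr : 0 ≤ r)
    (hlam : 1 ≤ lam) : a / (r + a * b) ≤ lam * a / (lam * a * b + r) := by
  have hlam_pos : 0 < lam := zero_lt_one.trans_le hlam
  rw [div_le_div_iff₀ (by positivity) (by positivity)]
  nlinarith [mul_nonneg (mul_nonneg (sub_nonneg.2 hlam) ha.le) hr]

lemma log_div_add_mul_le_log_mul_div_mul_add {a b r lam : ℝ} (ha : 0 < a) (hb : 0 < b)
    (hr : 0 ≤ r) (hlam : 1 ≤ lam) :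
    log (a / (r + a * b)) ≤ log (lam * a / (lam * a * b + r)) :=
  log_le_log (by positivity) (div_add_mul_le_mul_div_mul_add ha hb hr hlam)

theorem sd3_ge_mutual_information_general
    {Z S : Type*} [Fintype Z] [Fintype S] [DecidableEq Z]
    (p : Z → ℝ) (d : Z → S → ℝ)
    (hp_pos : ∀ z, 0 < p z)
    (hd_nonneg : ∀ z s, 0 ≤ d z s)
    (lam : ℝ) (hlam : 1 ≤ lam) :
    (∑ z, ∑ s, p z * d z s * Real.log (d z s / ∑ z', d z' s * p z')) ≤
      ∑ z, ∑ s, p z * d z s *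
        Real.log ((lam * d z s) /
          (lam * d z s * p z + ∑ z' ∈ Finset.univ \ {z}, d z' s * p z')) := by
  refine sum_le_sum fun z _ => sum_le_sum fun s _ => ?_
  obtain hd_zero | hd_pos := (hd_nonneg z s).eq_or_lt
  · simp [← hd_zero]
  have hrest : 0 ≤ ∑ z' ∈ univ \ {z}, d z' s * p z' :=
    sum_nonneg fun z' _ => mul_nonneg (hd_nonneg z' s) (hp_pos z').le
  rw [sum_eq_sum_sdiff_singleton_add (mem_univ z)]
  exact mul_le_mul_of_nonneg_left
    (log_div_add_mul_le_log_mul_div_mul_add hd_pos (hp_pos z) hrest hlam)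
    (mul_nonneg (hp_pos z).le hd_pos.le)

/-- For `λ ≥ 1`, the SD3 density-deviation objective is bounded below by the
mutual information between states and skills: `I(S;Z) ≤ I_SD3(λ)`. -/
theorem sd3_ge_mutual_information
    {Z S : Type*} [Fintype Z] [Fintype S] [Nonempty Z] [Nonempty S] [DecidableEq Z]
    (p : Z → ℝ) (d : Z → S → ℝ)
    (hp_pos : ∀ z, 0 < p z) (hp_sum : ∑ z, p z = 1)
    (hd_nonneg : ∀ z s, 0 ≤ d z s) (hd_sum : ∀ z, ∑ s, d z s = 1)
    (lam : ℝ) (hlam : 1 ≤ lam) :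
    (∑ z, ∑ s, p z * d z s * Real.log (d z s / ∑ z', d z' s * p z')) ≤
      ∑ z, ∑ s, p z * d z s *
        Real.log ((lam * d z s) /
          (lam * d z s * p z + ∑ z' ∈ Finset.univ \ {z}, d z' s * p z')) :=
  sd3_ge_mutual_information_general p d hp_pos hd_nonneg lam hlam
end

section
/- Let λ ≥ 1. Then I_SD3(λ) ≤ log λ + I(S;Z), i.e. the SD3 density-deviation objective exceeds the mutual information between states and skills by at most log λ. -/
/-!
Boosting the diagonal weight `d z s * p z` by `λ ≥ 1` only enlarges the denominator, so each
SD3 log-ratio is at most `log λ` plus the corresponding mutual-information log-ratio. Averaging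
against the joint distribution `p z * d z s`, whose total mass is `1`, gives the bound.
-/

open Finset Real

theorem Real.log_mul_div_le_log_add_log_div {l a b c : ℝ} (hl : 0 < l) (ha : 0 < a)
    (hb : 0 < b) (hbc : b ≤ c) : log (l * a / c) ≤ log l + log (a / b) :=
  calc log (l * a / c) ≤ log (l * a / b) := by
        gcongr
        exact div_pos (mul_pos hl ha) (hb.trans_le hbc)
    _ = log l + log (a / b) := by rw [mul_div_assoc, log_mul hl.ne' (div_pos ha hb).ne']

theorem sd3_summand_le {Z S : Type*} [Fintype Z] [DecidableEq Z] {p : Z → ℝ} {d : Z → S → ℝ}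
    (hp_pos : ∀ z, 0 < p z) (hd_nonneg : ∀ z s, 0 ≤ d z s)
    {lam : ℝ} (hlam : 1 ≤ lam) (z : Z) (s : S) :
    p z * d z s * log (lam * d z s / (lam * d z s * p z + ∑ z' ∈ univ \ {z}, d z' s * p z')) ≤
      p z * d z s * (log lam + log (d z s / ∑ z', d z' s * p z')) := by
  rcases (hd_nonneg z s).eq_or_lt with hd | hd
  · simp [← hd]
  have hsplit : ∑ z', d z' s * p z' = d z s * p z + ∑ z' ∈ univ \ {z}, d z' s * p z' :=
    sum_eq_add_sum_sdiff_singleton_of_mem (mem_univ z) _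
  have hrest : 0 ≤ ∑ z' ∈ univ \ {z}, d z' s * p z' :=
    sum_nonneg fun z' _ => mul_nonneg (hd_nonneg z' s) (hp_pos z').le
  have hdiag : d z s * p z ≤ lam * d z s * p z := by
    rw [mul_assoc]
    exact le_mul_of_one_le_left (mul_pos hd (hp_pos z)).le hlam
  refine mul_le_mul_of_nonneg_left (log_mul_div_le_log_add_log_div (by linarith) hd ?_ ?_)
    (mul_pos (hp_pos z) hd).le
  · rw [hsplit]
    exact add_pos_of_pos_of_nonneg (mul_pos hd (hp_pos z)) hrest
  · rw [hsplit]
    linarith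

theorem sd3_le_log_add_mutual_information_general
    {Z S : Type*} [Fintype Z] [Fintype S] [DecidableEq Z]
    (p : Z → ℝ) (d : Z → S → ℝ)
    (hp_pos : ∀ z, 0 < p z) (hp_sum : ∑ z, p z = 1)
    (hd_nonneg : ∀ z s, 0 ≤ d z s) (hd_sum : ∀ z, ∑ s, d z s = 1)
    (lam : ℝ) (hlam : 1 ≤ lam) :
    (∑ z, ∑ s, p z * d z s *
        Real.log ((lam * d z s) /
          (lam * d z s * p z + ∑ z' ∈ Finset.univ \ {z}, d z' s * p z'))) ≤
      Real.log lam +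
        ∑ z, ∑ s, p z * d z s * Real.log (d z s / ∑ z', d z' s * p z') := by
  have hmass : ∑ z, ∑ s, p z * d z s = 1 := by
    simp_rw [← mul_sum, hd_sum, mul_one, hp_sum]
  calc _ ≤ ∑ z, ∑ s, p z * d z s * (log lam + log (d z s / ∑ z', d z' s * p z')) :=
        sum_le_sum fun z _ => sum_le_sum fun s _ => sd3_summand_le hp_pos hd_nonneg hlam z s
    _ = _ := by simp_rw [mul_add, sum_add_distrib, ← sum_mul, hmass, one_mul]

/-- For `λ ≥ 1`, the SD3 density-deviation objective exceeds the mutual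
information between states and skills by at most `log λ`:
`I_SD3(λ) ≤ log λ + I(S;Z)`. -/
theorem sd3_le_log_add_mutual_information
    {Z S : Type*} [Fintype Z] [Fintype S] [Nonempty Z] [Nonempty S] [DecidableEq Z]
    (p : Z → ℝ) (d : Z → S → ℝ)
    (hp_pos : ∀ z, 0 < p z) (hp_sum : ∑ z, p z = 1)
    (hd_nonneg : ∀ z s, 0 ≤ d z s) (hd_sum : ∀ z, ∑ s, d z s = 1)
    (lam : ℝ) (hlam : 1 ≤ lam) :
    (∑ z, ∑ s, p z * d z s *
        Real.log ((lam * d z s) /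
          (lam * d z s * p z + ∑ z' ∈ Finset.univ \ {z}, d z' s * p z'))) ≤
      Real.log lam +
        ∑ z, ∑ s, p z * d z s * Real.log (d z s / ∑ z', d z' s * p z') :=
  sd3_le_log_add_mutual_information_general p d hp_pos hp_sum hd_nonneg hd_sum lam hlam
end

section
/- The map λ ↦ I_SD3(λ) is monotone nondecreasing on (0, ∞): if 0 < λ₁ ≤ λ₂ then I_SD3(λ₁) ≤ I_SD3(λ₂). -/
open Finset Real

/-! Each summand is separately nondecreasing in `λ`: with `t = λ · d z s`, the argument of the
logarithm is `t / (t · p z + r)` for some `r ≥ 0`, and `t ↦ t / (t c + r)` is nondecreasing on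
`[0, ∞)` because `t₁ (t₂ c + r) ≤ t₂ (t₁ c + r)` reduces to `t₁ r ≤ t₂ r`. -/

lemma monotoneOn_div_mul_add {c r : ℝ} (hc : 0 ≤ c) (hr : 0 ≤ r) :
    MonotoneOn (fun t : ℝ => t / (t * c + r)) (Set.Ici 0) := by
  intro t₁ (ht₁ : 0 ≤ t₁) t₂ _ hle
  have ht₂ : 0 ≤ t₂ := ht₁.trans hle
  rcases (show 0 ≤ t₁ * c + r by positivity).eq_or_lt with hden₁ | hden₁
  · simp only [← hden₁, div_zero]
    positivity
  have hden₂ : 0 < t₂ * c + r := hden₁.trans_le (by gcongr)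
  rw [div_le_div_iff₀ hden₁ hden₂]
  nlinarith [mul_le_mul_of_nonneg_right hle hr]

lemma monotoneOn_mul_mul_log_div_mul_add {c x r : ℝ} (hc : 0 < c) (hx : 0 ≤ x) (hr : 0 ≤ r) :
    MonotoneOn (fun l : ℝ => c * x * log (l * x / (l * x * c + r))) (Set.Ioi 0) := by
  intro l₁ (hl₁ : 0 < l₁) l₂ _ hle
  rcases hx.eq_or_lt with rfl | hx
  · simp
  have hpos : 0 < l₁ * x / (l₁ * x * c + r) := by positivity
  have hmono : l₁ * x / (l₁ * x * c + r) ≤ l₂ * x / (l₂ * x * c + r) :=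
    monotoneOn_div_mul_add hc.le hr (Set.mem_Ici.2 (by positivity))
      (Set.mem_Ici.2 (by nlinarith)) (by gcongr)
  exact mul_le_mul_of_nonneg_left (log_le_log hpos hmono) (by positivity)

theorem sd3_monotone_general
    {Z S : Type*} [Fintype Z] [Fintype S] [DecidableEq Z]
    (p : Z → ℝ) (d : Z → S → ℝ)
    (hp_pos : ∀ z, 0 < p z)
    (hd_nonneg : ∀ z s, 0 ≤ d z s)
    (lam₁ lam₂ : ℝ) (hlam₁ : 0 < lam₁) (hle : lam₁ ≤ lam₂) :
    (∑ z, ∑ s, p z * d z s *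
        Real.log ((lam₁ * d z s) /
          (lam₁ * d z s * p z + ∑ z' ∈ Finset.univ \ {z}, d z' s * p z'))) ≤
      ∑ z, ∑ s, p z * d z s *
        Real.log ((lam₂ * d z s) /
          (lam₂ * d z s * p z + ∑ z' ∈ Finset.univ \ {z}, d z' s * p z')) := by
  refine sum_le_sum fun z _ => sum_le_sum fun s _ => ?_
  have hr : 0 ≤ ∑ z' ∈ Finset.univ \ {z}, d z' s * p z' :=
    sum_nonneg fun z' _ => mul_nonneg (hd_nonneg z' s) (hp_pos z').le
  exact monotoneOn_mul_mul_log_div_mul_add (hp_pos z) (hd_nonneg z s) hr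
    hlam₁ (hlam₁.trans_le hle) hle

/-- The map `λ ↦ I_SD3(λ)` is monotone nondecreasing on `(0, ∞)`:
if `0 < λ₁ ≤ λ₂` then `I_SD3(λ₁) ≤ I_SD3(λ₂)`. -/
theorem sd3_monotone
    {Z S : Type*} [Fintype Z] [Fintype S] [Nonempty Z] [Nonempty S] [DecidableEq Z]
    (p : Z → ℝ) (d : Z → S → ℝ)
    (hp_pos : ∀ z, 0 < p z) (hp_sum : ∑ z, p z = 1)
    (hd_nonneg : ∀ z s, 0 ≤ d z s) (hd_sum : ∀ z, ∑ s, d z s = 1)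
    (lam₁ lam₂ : ℝ) (hlam₁ : 0 < lam₁) (hle : lam₁ ≤ lam₂) :
    (∑ z, ∑ s, p z * d z s *
        Real.log ((lam₁ * d z s) /
          (lam₁ * d z s * p z + ∑ z' ∈ Finset.univ \ {z}, d z' s * p z'))) ≤
      ∑ z, ∑ s, p z * d z s *
        Real.log ((lam₂ * d z s) /
          (lam₂ * d z s * p z + ∑ z' ∈ Finset.univ \ {z}, d z' s * p z')) :=
  sd3_monotone_general p d hp_pos hd_nonneg lam₁ lam₂ hlam₁ hle
end

section
/- For every λ > 0, I_SD3(λ) − I(S;Z) = log λ − ∑_z ∑_s p z · d z s · log( 1 + (λ − 1) · (d z s · p z) / (d z s · p z + η_z(s)) ), where η_z(s) = ∑_{z' ≠ z} d z' s · p z' and a summand is taken to be 0 whenever d z s = 0. -/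
open Finset Real

/-! Rescaling the posterior weight of the true `z` by `λ` changes the pointwise log-ratio by
`log λ − log(1 + (λ − 1) q)`, where `q = d z s · p z / ∑_{z'} d z' s · p z'` is the posterior
of `z` given `s`; since the weights `p z · d z s` sum to `1`, the `log λ` terms add up to `log λ`. -/

lemma one_add_sub_one_mul_div_add {a η : ℝ} (lam : ℝ) (h : a + η ≠ 0) :
    1 + (lam - 1) * a / (a + η) = (lam * a + η) / (a + η) := by
  field_simp
  ring

lemma log_mul_div_sub_log_div {D P η lam : ℝ} (hD : 0 < D) (hP : 0 < P) (hη : 0 ≤ η)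
    (hlam : 0 < lam) :
    log (lam * D / (lam * D * P + η)) - log (D / (D * P + η)) =
      log lam - log (1 + (lam - 1) * (D * P) / (D * P + η)) := by
  have hDP : 0 < D * P + η := by positivity
  have hlamDP : 0 < lam * D * P + η := by positivity
  rw [one_add_sub_one_mul_div_add lam hDP.ne', ← mul_assoc,
    log_div (by positivity) hlamDP.ne', log_div hD.ne' hDP.ne',
    log_div hlamDP.ne' hDP.ne', log_mul hlam.ne' hD.ne']
  ring

lemma sum_sum_mul_mul_const_of_sum_eq_one {Z S : Type*} [Fintype Z] [Fintype S]
    {p : Z → ℝ} {d : Z → S → ℝ} (hp_sum : ∑ z, p z = 1) (hd_sum : ∀ z, ∑ s, d z s = 1)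
    (c : ℝ) : ∑ z, ∑ s, p z * d z s * c = c := by
  simp_rw [mul_assoc, ← Finset.mul_sum, ← Finset.sum_mul, hd_sum, one_mul, ← Finset.sum_mul,
    hp_sum, one_mul]

theorem sd3_sub_mutual_information_eq_general
    {Z S : Type*} [Fintype Z] [Fintype S] [DecidableEq Z]
    (p : Z → ℝ) (d : Z → S → ℝ)
    (hp_pos : ∀ z, 0 < p z) (hp_sum : ∑ z, p z = 1)
    (hd_nonneg : ∀ z s, 0 ≤ d z s) (hd_sum : ∀ z, ∑ s, d z s = 1)
    (lam : ℝ) (hlam : 0 < lam) :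
    (∑ z, ∑ s, p z * d z s *
        Real.log ((lam * d z s) /
          (lam * d z s * p z + ∑ z' ∈ Finset.univ \ {z}, d z' s * p z'))) -
      (∑ z, ∑ s, p z * d z s * Real.log (d z s / ∑ z', d z' s * p z')) =
    Real.log lam -
      ∑ z, ∑ s, p z * d z s *
        Real.log (1 + (lam - 1) * (d z s * p z) /
          (d z s * p z + ∑ z' ∈ Finset.univ \ {z}, d z' s * p z')) := by
  rw [← sum_sum_mul_mul_const_of_sum_eq_one hp_sum hd_sum (log lam)]
  simp only [← Finset.sum_sub_distrib, ← mul_sub]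
  refine Finset.sum_congr rfl fun z _ => Finset.sum_congr rfl fun s _ => ?_
  rcases (hd_nonneg z s).eq_or_lt with hd_zero | hd_pos
  · simp [← hd_zero]
  have hη : 0 ≤ ∑ z' ∈ Finset.univ \ {z}, d z' s * p z' :=
    Finset.sum_nonneg fun z' _ => mul_nonneg (hd_nonneg z' s) (hp_pos z').le
  rw [Finset.sum_eq_add_sum_sdiff_singleton_of_mem (Finset.mem_univ z),
    log_mul_div_sub_log_div hd_pos (hp_pos z) hη hlam]

/-- For every `λ > 0`,
`I_SD3(λ) − I(S;Z) = log λ − ∑_z ∑_s p z · d z s ·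
  log(1 + (λ − 1) · (d z s · p z) / (d z s · p z + η_z(s)))`,
where `η_z(s) = ∑_{z' ≠ z} d z' s · p z'`. -/
theorem sd3_sub_mutual_information_eq
    {Z S : Type*} [Fintype Z] [Fintype S] [Nonempty Z] [Nonempty S] [DecidableEq Z]
    (p : Z → ℝ) (d : Z → S → ℝ)
    (hp_pos : ∀ z, 0 < p z) (hp_sum : ∑ z, p z = 1)
    (hd_nonneg : ∀ z s, 0 ≤ d z s) (hd_sum : ∀ z, ∑ s, d z s = 1)
    (lam : ℝ) (hlam : 0 < lam) :
    (∑ z, ∑ s, p z * d z s *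
        Real.log ((lam * d z s) /
          (lam * d z s * p z + ∑ z' ∈ Finset.univ \ {z}, d z' s * p z'))) -
      (∑ z, ∑ s, p z * d z s * Real.log (d z s / ∑ z', d z' s * p z')) =
    Real.log lam -
      ∑ z, ∑ s, p z * d z s *
        Real.log (1 + (lam - 1) * (d z s * p z) /
          (d z s * p z + ∑ z' ∈ Finset.univ \ {z}, d z' s * p z')) :=
  sd3_sub_mutual_information_eq_general p d hp_pos hp_sum hd_nonneg hd_sum lam hlam
end

section
/- For every λ > 0, I_SD3(λ) ≤ H(Z), where H(Z) = −∑_z p z · log (p z) is the entropy of the skill distribution. (The SD3 density-deviation objective is bounded above by the skill entropy.) -/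
/-!
Each summand is at most `p z · d z s · log (1 / p z)`: dropping the nonnegative mass of the other
skills from the denominator only increases the ratio, and `λ d / (λ d p) = 1 / p`. Summing over `s`
with `∑_s d z s = 1` leaves exactly the entropy.
-/

open Finset Real

lemma log_div_mul_add_le_neg_log {a q r : ℝ} (ha : 0 < a) (hq : 0 < q) (hr : 0 ≤ r) :
    log (a / (a * q + r)) ≤ -log q :=
  calc log (a / (a * q + r))
      ≤ log (a / (a * q)) := by
        gcongr
        linarith
    _ = -log q := by rw [div_mul_cancel_left₀ ha.ne', log_inv]

lemma mul_mul_log_div_le_mul_mul_neg_log {w a c q r : ℝ} (hw : 0 ≤ w) (ha : 0 ≤ a) (hc : 0 < c)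
    (hq : 0 < q) (hr : 0 ≤ r) :
    w * a * log (c * a / (c * a * q + r)) ≤ w * a * -log q := by
  rcases ha.eq_or_lt with rfl | ha
  · simp
  · exact mul_le_mul_of_nonneg_left (log_div_mul_add_le_neg_log (by positivity) hq hr)
      (by positivity)

theorem sd3_le_entropy_general
    {Z S : Type*} [Fintype Z] [Fintype S] [DecidableEq Z]
    (p : Z → ℝ) (d : Z → S → ℝ)
    (hp_pos : ∀ z, 0 < p z)
    (hd_nonneg : ∀ z s, 0 ≤ d z s) (hd_sum : ∀ z, ∑ s, d z s = 1)
    (lam : ℝ) (hlam : 0 < lam) :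
    (∑ z, ∑ s, p z * d z s *
        Real.log ((lam * d z s) /
          (lam * d z s * p z + ∑ z' ∈ Finset.univ \ {z}, d z' s * p z'))) ≤
      -∑ z, p z * Real.log (p z) :=
  calc _ ≤ ∑ z, ∑ s, p z * d z s * -log (p z) :=
        sum_le_sum fun z _ => sum_le_sum fun s _ =>
          mul_mul_log_div_le_mul_mul_neg_log (hp_pos z).le (hd_nonneg z s) hlam (hp_pos z)
            (sum_nonneg fun z' _ => mul_nonneg (hd_nonneg z' s) (hp_pos z').le)
    _ = -∑ z, p z * log (p z) := by
        simp_rw [← sum_mul, ← mul_sum, hd_sum, ← sum_neg_distrib, mul_one, mul_neg]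

/-- For every `λ > 0`, the SD3 density-deviation objective is bounded above by
the entropy of the skill distribution: `I_SD3(λ) ≤ H(Z) = −∑_z p z · log (p z)`. -/
theorem sd3_le_entropy
    {Z S : Type*} [Fintype Z] [Fintype S] [Nonempty Z] [Nonempty S] [DecidableEq Z]
    (p : Z → ℝ) (d : Z → S → ℝ)
    (hp_pos : ∀ z, 0 < p z) (hp_sum : ∑ z, p z = 1)
    (hd_nonneg : ∀ z s, 0 ≤ d z s) (hd_sum : ∀ z, ∑ s, d z s = 1)
    (lam : ℝ) (hlam : 0 < lam) :
    (∑ z, ∑ s, p z * d z s *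
        Real.log ((lam * d z s) /
          (lam * d z s * p z + ∑ z' ∈ Finset.univ \ {z}, d z' s * p z'))) ≤
      -∑ z, p z * Real.log (p z) :=
  sd3_le_entropy_general p d hp_pos hd_nonneg hd_sum lam hlam
end

section
/- Suppose that for every pair (s, z) with p z · d z s > 0 we have ∑_{z' ≠ z} d z' s = 0 (i.e. the skills have pairwise disjoint state supports). Then for every λ > 0, I_SD3(λ) = H(Z), so the SD3 objective attains its maximal value, the skill entropy. -/
/-! Where `p z * d z s > 0`, disjointness makes every competing term `d z' s * p z'` vanish, so
the logarithm reduces to `log (λ d z s / (λ d z s * p z)) = -log (p z)`, independently of `λ` and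
`s`. Averaging over `s` with the weights `d z s`, which sum to one, leaves `-∑ z, p z * log (p z)`. -/

open Finset Real

theorem Finset.sum_mul_eq_zero_of_sum_eq_zero {ι R : Type*} [NonUnitalNonAssocSemiring R]
    [PartialOrder R] [AddLeftMono R] {s : Finset ι} {f : ι → R} (g : ι → R)
    (hf : ∀ i ∈ s, 0 ≤ f i) (hsum : ∑ i ∈ s, f i = 0) : ∑ i ∈ s, f i * g i = 0 :=
  sum_eq_zero fun i hi => by rw [(sum_eq_zero_iff_of_nonneg hf).mp hsum i hi, zero_mul]

theorem Finset.sum_sum_mul_eq_of_sum_eq_one {ι κ R : Type*} [CommSemiring R]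
    (s : Finset ι) (t : Finset κ) (p c : ι → R) (d : ι → κ → R)
    (hd : ∀ i ∈ s, ∑ j ∈ t, d i j = 1) :
    ∑ i ∈ s, ∑ j ∈ t, p i * d i j * c i = ∑ i ∈ s, p i * c i := by
  refine sum_congr rfl fun i hi => ?_
  simp_rw [mul_right_comm _ _ (c i), ← mul_sum, hd i hi, mul_one]

theorem mul_log_div_eq_neg_log_of_disjoint {Z S : Type*} [Fintype Z] [DecidableEq Z]
    {p : Z → ℝ} {d : Z → S → ℝ} {lam : ℝ} (hp_pos : ∀ z, 0 < p z)
    (hd_nonneg : ∀ z s, 0 ≤ d z s)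
    (hdisj : ∀ s z, 0 < p z * d z s → ∑ z' ∈ Finset.univ \ {z}, d z' s = 0)
    (hlam : 0 < lam) (z : Z) (s : S) :
    p z * d z s *
        Real.log ((lam * d z s) /
          (lam * d z s * p z + ∑ z' ∈ Finset.univ \ {z}, d z' s * p z')) =
      p z * d z s * -Real.log (p z) := by
  rcases (hd_nonneg z s).eq_or_lt with hd_zero | hd_pos
  · simp [← hd_zero]
  have hothers : ∑ z' ∈ Finset.univ \ {z}, d z' s * p z' = 0 :=
    sum_mul_eq_zero_of_sum_eq_zero p (fun z' _ => hd_nonneg z' s)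
      (hdisj s z (mul_pos (hp_pos z) hd_pos))
  rw [hothers, add_zero, div_mul_cancel_left₀ (mul_pos hlam hd_pos).ne', Real.log_inv]

theorem sd3_eq_entropy_of_disjoint_supports_general
    {Z S : Type*} [Fintype Z] [Fintype S] [DecidableEq Z]
    (p : Z → ℝ) (d : Z → S → ℝ)
    (hp_pos : ∀ z, 0 < p z)
    (hd_nonneg : ∀ z s, 0 ≤ d z s) (hd_sum : ∀ z, ∑ s, d z s = 1)
    (hdisj : ∀ s z, 0 < p z * d z s → ∑ z' ∈ Finset.univ \ {z}, d z' s = 0)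
    (lam : ℝ) (hlam : 0 < lam) :
    (∑ z, ∑ s, p z * d z s *
        Real.log ((lam * d z s) /
          (lam * d z s * p z + ∑ z' ∈ Finset.univ \ {z}, d z' s * p z'))) =
      -∑ z, p z * Real.log (p z) := by
  simp_rw [mul_log_div_eq_neg_log_of_disjoint hp_pos hd_nonneg hdisj hlam,
    sum_sum_mul_eq_of_sum_eq_one _ _ _ _ d fun z _ => hd_sum z, mul_neg, sum_neg_distrib]

/-- If the skills have pairwise disjoint state supports, i.e. for every pair
`(s, z)` with `p z · d z s > 0` we have `∑_{z' ≠ z} d z' s = 0`, then for every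
`λ > 0` the SD3 objective attains its maximal value, the skill entropy:
`I_SD3(λ) = H(Z)`. -/
theorem sd3_eq_entropy_of_disjoint_supports
    {Z S : Type*} [Fintype Z] [Fintype S] [Nonempty Z] [Nonempty S] [DecidableEq Z]
    (p : Z → ℝ) (d : Z → S → ℝ)
    (hp_pos : ∀ z, 0 < p z) (hp_sum : ∑ z, p z = 1)
    (hd_nonneg : ∀ z s, 0 ≤ d z s) (hd_sum : ∀ z, ∑ s, d z s = 1)
    (hdisj : ∀ s z, 0 < p z * d z s → ∑ z' ∈ Finset.univ \ {z}, d z' s = 0)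
    (lam : ℝ) (hlam : 0 < lam) :
    (∑ z, ∑ s, p z * d z s *
        Real.log ((lam * d z s) /
          (lam * d z s * p z + ∑ z' ∈ Finset.univ \ {z}, d z' s * p z'))) =
      -∑ z, p z * Real.log (p z) :=
  sd3_eq_entropy_of_disjoint_supports_general p d hp_pos hd_nonneg hd_sum hdisj lam hlam
end
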